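/- Let G = (U, W; E) be a finite bipartite graph possibly with parallel edges, with preference functions p_v for every vertex v (ties allowed), and a set C ⊆ U ∪ W of critical vertices. Then there exists a matching M that is critical and has no blocking edge e = (u, w) such that M \ {M(u), M(w)} ∪ {e} is still critical. (That is, a critical matching satisfying the strengthened form of relaxed stability always exists.) -/

import Mathlib

open scoped Classical

/-- `M` is a matching: every vertex is incident to at most one edge of `M`. -/
def IsMatching {U W E : Type*} (eu : E → U) (ew : E → W) (M : Finset E) : Prop :=
  ∀ e ∈ M, ∀ f ∈ M, e ≠ f → eu e ≠ eu f ∧ ew e ≠ ew f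

/-- The preference value `p_u(M(u))` of the `M`-partner of `u ∈ U` (with `p_u(∅) = 0`). -/
noncomputable def valU {U E : Type*} (eu : E → U) (pU : E → ℝ) (M : Finset E)
    (u : U) : ℝ :=
  ∑ f ∈ M.filter (fun f => eu f = u), pU f

/-- The preference value `p_w(M(w))` of the `M`-partner of `w ∈ W` (with `p_w(∅) = 0`). -/
noncomputable def valW {W E : Type*} (ew : E → W) (pW : E → ℝ) (M : Finset E)
    (w : W) : ℝ :=
  ∑ f ∈ M.filter (fun f => ew f = w), pW f

/-- The edge `e = (u, w) ∉ M` blocks the matching `M`. -/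
noncomputable def Blocks {U W E : Type*} (eu : E → U) (ew : E → W) (pU pW : E → ℝ)
    (M : Finset E) (e : E) : Prop :=
  e ∉ M ∧ pU e > valU eu pU M (eu e) ∧ pW e > valW ew pW M (ew e)

/-- The number of critical vertices (elements of `C ⊆ U ⊕ W`) covered by `M`. -/
noncomputable def critCovered {U W E : Type*} (eu : E → U) (ew : E → W)
    (C : Finset (U ⊕ W)) (M : Finset E) : ℕ :=
  (C.filter (fun v =>
    Sum.elim (fun u => ∃ e ∈ M, eu e = u) (fun w => ∃ e ∈ M, ew e = w) v)).card

/-- `M` is critical: no matching covers strictly more critical vertices than `M`. -/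
def IsCritical {U W E : Type*} (eu : E → U) (ew : E → W) (C : Finset (U ⊕ W))
    (M : Finset E) : Prop :=
  ∀ N : Finset E, IsMatching eu ew N → critCovered eu ew C N ≤ critCovered eu ew C M

/-- `M \ {M(u), M(w)} ∪ {e}` for `e = (u, w)`. -/
noncomputable def swapIn {U W E : Type*} [DecidableEq E] (eu : E → U) (ew : E → W)
    (M : Finset E) (e : E) : Finset E :=
  insert e (M.filter (fun f => eu f ≠ eu e ∧ ew f ≠ ew e))

/-
For a matching `M`, the number of critical vertices it covers is `∑_{e ∈ M} c(e)`, where `c(e)`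
counts the critical endpoints of `e`. The dual LP of maximising this has an integral optimum
`(yU, yW)` attained by a matching `M₀`: apply one-sided König to the critical vertices of each side
and merge the two matchings by Mendelsohn–Dulmage. By complementary slackness, a matching is
critical iff it uses only tight edges and covers every vertex of positive dual value.

Take a stable matching `M` on the tight edges, in which a vertex ranks an edge first by whether its
other endpoint has positive dual value, then by whether it is parallel to an edge of `M₀`, and only
then by preference. Stability against the edges of `M₀` makes `M` cover every vertex of positive
dual value, so `M` is critical. If `e = (u, w)` blocks `M` and the swap along `e` is still
critical, then `e` is tight, so by stability it is weakly beaten, say by `f = M(u)`. The swap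
uncovers the other endpoint of `f` unless `f` is parallel to `e`, so either that endpoint has dual
value `0` or `f ∥ e`; in both cases `u` ranks `f` no higher than `e` before preferences, hence
`p_u(f) ≥ p_u(e)` and `e` does not block.
-/

open Finset

section Matching

variable {U W E : Type*} {eu : E → U} {ew : E → W}

theorem IsMatching.swap {M : Finset E} (hM : IsMatching eu ew M) : IsMatching ew eu M :=
  fun e he f hf hne => (hM e he f hf hne).symm

theorem IsMatching.eq_of_eu_eq {M : Finset E} (hM : IsMatching eu ew M) {e f : E}
    (he : e ∈ M) (hf : f ∈ M) (h : eu e = eu f) : e = f := by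
  by_contra hne
  exact (hM e he f hf hne).1 h

theorem valU_eq_of_mem {pU : E → ℝ} {M : Finset E} (hM : IsMatching eu ew M) {f : E}
    (hf : f ∈ M) : valU eu pU M (eu f) = pU f := by
  rw [valU, sum_eq_single_of_mem f (mem_filter.2 ⟨hf, rfl⟩ : f ∈ M.filter (eu · = eu f))]
  intro g hg hgf
  exact absurd (hM.eq_of_eu_eq (mem_filter.1 hg).1 hf (mem_filter.1 hg).2) hgf

variable [DecidableEq E]

theorem swapIn_comm (M : Finset E) (e : E) : swapIn ew eu M e = swapIn eu ew M e := by
  simp only [swapIn, and_comm]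

theorem isMatching_swapIn {M : Finset E} (hM : IsMatching eu ew M) {e : E} (he : e ∉ M) :
    IsMatching eu ew (swapIn eu ew M e) := by
  intro x hx y hy hne
  simp only [swapIn, mem_insert, mem_filter] at hx hy
  rcases hx with rfl | ⟨hx, hxu, hxw⟩ <;> rcases hy with rfl | ⟨hy, hyu, hyw⟩
  · exact absurd rfl hne
  · exact ⟨Ne.symm hyu, Ne.symm hyw⟩
  · exact ⟨hxu, hxw⟩
  · exact hM x hx y hy hne

theorem notMem_image_swapIn {M : Finset E} (hM : IsMatching eu ew M) {e f : E} (hf : f ∈ M)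
    (hfe : eu f = eu e) (hw : ew f ≠ ew e) : ew f ∉ (swapIn eu ew M e).image ew := by
  simp only [swapIn, mem_image, mem_insert, mem_filter]
  rintro ⟨g, rfl | ⟨hg, hgu, -⟩, hgw⟩
  · exact hw hgw.symm
  · exact (hM g hg f hf (by rintro rfl; exact hgu hfe)).2 hgw

end Matching

section Stable

variable {U W E K K' : Type*} (eu : E → U) (ew : E → W)

def IsStableIn [LE K] [LE K'] (kU : E → K) (kW : E → K') (A M : Finset E) : Prop :=
  M ⊆ A ∧ IsMatching eu ew M ∧
    ∀ e ∈ A, e ∉ M → (∃ f ∈ M, eu f = eu e ∧ kU e ≤ kU f) ∨ (∃ f ∈ M, ew f = ew e ∧ kW e ≤ kW f)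

variable {eu ew}

theorem IsStableIn.swap [LE K] [LE K'] {kU : E → K} {kW : E → K'} {A M : Finset E}
    (h : IsStableIn eu ew kU kW A M) : IsStableIn ew eu kW kU A M :=
  ⟨h.1, h.2.1.swap, fun e he heM => (h.2.2 e he heM).symm⟩

theorem injective_toLex_equivFin [Fintype E] (k : E → K) :
    Function.Injective fun e => toLex (k e, Fintype.equivFin E e) :=
  fun _ _ h => (Fintype.equivFin E).injective (Prod.ext_iff.1 (toLex.injective h)).2

variable [LinearOrder K] [LinearOrder K'] {kU : E → K} {kW : E → K'}

noncomputable def topEdges (eu : E → U) (kU : E → K) (A : Finset E) : Finset E :=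
  A.filter fun e => ∀ f ∈ A, eu f = eu e → kU f ≤ kU e

theorem exists_mem_topEdges_lt (hkU : Function.Injective kU) {A : Finset E} {e : E}
    (he : e ∈ A) (hne : e ∉ topEdges eu kU A) :
    ∃ f ∈ topEdges eu kU A, eu f = eu e ∧ kU e < kU f := by
  obtain ⟨g, hg, hgmax⟩ := exists_max_image (A.filter (eu · = eu e)) kU ⟨e, mem_filter.2 ⟨he, rfl⟩⟩
  obtain ⟨hgA, hgu⟩ := mem_filter.1 hg
  have hgtop : g ∈ topEdges eu kU A :=
    mem_filter.2 ⟨hgA, fun f hf hfu => hgmax f (mem_filter.2 ⟨hf, hfu.trans hgu⟩)⟩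
  refine ⟨g, hgtop, hgu, lt_of_le_of_ne (hgmax e (mem_filter.2 ⟨he, rfl⟩)) ?_⟩
  intro hkg
  exact hne (hkU hkg ▸ hgtop)

/-- If `w` likes an edge `e₂` less than an edge `e₁` that is the favourite of its `U`-endpoint,
then `e₂` can be deleted, as it will be beaten at `w`; once no such pair remains, the favourite
edges form a matching. -/
theorem exists_stable_of_injective (hkU : Function.Injective kU) (hkW : Function.Injective kW)
    (A : Finset E) :
    ∃ M ⊆ A, IsMatching eu ew M ∧ ∀ e ∈ A, e ∉ M →
      (∃ f ∈ M, eu f = eu e ∧ kU e < kU f) ∨ (∃ f ∈ M, ew f = ew e ∧ kW e < kW f) := by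
  induction A using Finset.strongInduction with
  | _ A ih =>
  by_cases hrival : ∃ e₁ ∈ topEdges eu kU A, ∃ e₂ ∈ A, ew e₂ = ew e₁ ∧ kW e₂ < kW e₁
  · obtain ⟨e₁, he₁, e₂, he₂, hw, hlt⟩ := hrival
    obtain ⟨he₁A, htop⟩ := mem_filter.1 he₁
    have hne : e₁ ≠ e₂ := by rintro rfl; exact lt_irrefl _ hlt
    obtain ⟨M, hMA, hM, hst⟩ := ih (A.erase e₂) (erase_ssubset he₂)
    refine ⟨M, hMA.trans (erase_subset _ _), hM, fun e heA heM => ?_⟩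
    by_cases he : e = e₂
    · subst he
      by_cases he₁M : e₁ ∈ M
      · exact Or.inr ⟨e₁, he₁M, hw.symm, hlt⟩
      rcases hst e₁ (mem_erase.2 ⟨hne, he₁A⟩) he₁M with ⟨f, hf, hfu, hf₁⟩ | ⟨f, hf, hfw, hf₁⟩
      · exact absurd (htop f (erase_subset _ _ (hMA hf)) hfu) (not_le.2 hf₁)
      · exact Or.inr ⟨f, hf, hfw.trans hw.symm, hlt.trans hf₁⟩
    · exact hst e (mem_erase.2 ⟨he, heA⟩) heM
  · push Not at hrival
    refine ⟨topEdges eu kU A, filter_subset _ _, fun e he f hf hne => ⟨fun hu => ?_, fun hw => ?_⟩,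
      fun e he heM => Or.inl (exists_mem_topEdges_lt hkU he heM)⟩
    · obtain ⟨heA, hetop⟩ := mem_filter.1 he
      obtain ⟨hfA, hftop⟩ := mem_filter.1 hf
      exact hne (hkU (le_antisymm (hftop e heA hu) (hetop f hfA hu.symm)))
    · exact hne (hkW (le_antisymm (hrival e he f (mem_filter.1 hf).1 hw.symm)
        (hrival f hf e (mem_filter.1 he).1 hw)))

variable (eu ew) in
/-- Ties are broken by an enumeration of the edges. -/
theorem exists_isStableIn [Fintype E] (kU : E → K) (kW : E → K') (A : Finset E) :
    ∃ M, IsStableIn eu ew kU kW A M := by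
  obtain ⟨M, hMA, hM, hst⟩ := exists_stable_of_injective (eu := eu) (ew := ew)
    (injective_toLex_equivFin kU) (injective_toLex_equivFin kW) A
  refine ⟨M, hMA, hM, fun e he heM => ?_⟩
  rcases hst e he heM with ⟨f, hf, hfe, hlt⟩ | ⟨f, hf, hfe, hlt⟩
  exacts [Or.inl ⟨f, hf, hfe, Prod.Lex.monotone_fst _ _ hlt.le⟩,
    Or.inr ⟨f, hf, hfe, Prod.Lex.monotone_fst _ _ hlt.le⟩]

end Stable

section Dulmage

variable {U W E : Type*} {eu : E → U} {ew : E → W} {M₁ M₂ : Finset E} {a : U}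

variable (eu ew M₁ M₂ a) in
inductive AltReach : E → Prop
  | base {f : E} : f ∈ M₁ → eu f = a → AltReach f
  | stepW {f g : E} : AltReach f → f ∈ M₁ → g ∈ M₂ → ew g = ew f → AltReach g
  | stepU {f g : E} : AltReach f → f ∈ M₂ → g ∈ M₁ → eu g = eu f → AltReach g

theorem AltReach.exists_mem_left_of_mem_right {g : E} (hr : AltReach eu ew M₁ M₂ a g)
    (hg : g ∈ M₂) : ∃ f ∈ M₁, AltReach eu ew M₁ M₂ a f ∧ ew f = ew g := by
  induction hr with
  | base hf hfa => exact ⟨_, hf, .base hf hfa, rfl⟩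
  | stepW hr hf _ hw => exact ⟨_, hf, hr, hw.symm⟩
  | stepU hr hf hg' hu => exact ⟨_, hg', .stepU hr hf hg' hu, rfl⟩

theorem AltReach.eq_or_exists_mem_right {g : E} (hr : AltReach eu ew M₁ M₂ a g) :
    eu g = a ∨ ∃ f ∈ M₂, AltReach eu ew M₁ M₂ a f ∧ eu f = eu g := by
  induction hr with
  | base _ hfa => exact .inl hfa
  | stepW hr hf hg' hw => exact .inr ⟨_, hg', .stepW hr hf hg' hw, rfl⟩
  | stepU hr hf _ hu => exact .inr ⟨_, hf, hr, hu.symm⟩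

variable [DecidableEq E]

variable (eu ew M₁ M₂ a) in
noncomputable def altFlip : Finset E :=
  M₂.filter (¬ AltReach eu ew M₁ M₂ a ·) ∪ M₁.filter (AltReach eu ew M₁ M₂ a)

theorem isMatching_altFlip (hM₁ : IsMatching eu ew M₁) (hM₂ : IsMatching eu ew M₂)
    (ha : a ∉ M₂.image eu) : IsMatching eu ew (altFlip eu ew M₁ M₂ a) := by
  have cross : ∀ e₂ ∈ M₂.filter (¬ AltReach eu ew M₁ M₂ a ·),
      ∀ e₁ ∈ M₁.filter (AltReach eu ew M₁ M₂ a), eu e₂ ≠ eu e₁ ∧ ew e₂ ≠ ew e₁ := by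
    intro e₂ h₂ e₁ h₁
    obtain ⟨he₂, hr₂⟩ := mem_filter.1 h₂
    obtain ⟨he₁, hr₁⟩ := mem_filter.1 h₁
    refine ⟨fun hu => ?_, fun hw => hr₂ (.stepW hr₁ he₁ he₂ hw)⟩
    rcases hr₁.eq_or_exists_mem_right with h | ⟨f, hf, hrf, hfu⟩
    · exact ha (mem_image.2 ⟨e₂, he₂, hu.trans h⟩)
    · exact hr₂ (hM₂.eq_of_eu_eq hf he₂ (hfu.trans hu.symm) ▸ hrf)
  intro e he f hf hne
  simp only [altFlip, mem_union] at he hf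
  rcases he with he | he <;> rcases hf with hf | hf
  · exact hM₂ e (mem_filter.1 he).1 f (mem_filter.1 hf).1 hne
  · exact cross e he f hf
  · exact ⟨(cross f hf e he).1.symm, (cross f hf e he).2.symm⟩
  · exact hM₁ e (mem_filter.1 he).1 f (mem_filter.1 hf).1 hne

theorem image_ew_subset_altFlip : M₂.image ew ⊆ (altFlip eu ew M₁ M₂ a).image ew := by
  intro w hw
  obtain ⟨g, hg, rfl⟩ := mem_image.1 hw
  by_cases hr : AltReach eu ew M₁ M₂ a g
  · obtain ⟨f, hf, hrf, hfw⟩ := hr.exists_mem_left_of_mem_right hg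
    exact mem_image.2 ⟨f, mem_union_right _ (mem_filter.2 ⟨hf, hrf⟩), hfw⟩
  · exact mem_image.2 ⟨g, mem_union_left _ (mem_filter.2 ⟨hg, hr⟩), rfl⟩

theorem image_eu_inter_subset_altFlip (ha : a ∈ M₁.image eu) :
    insert a (M₁.image eu ∩ M₂.image eu) ⊆ (altFlip eu ew M₁ M₂ a).image eu := by
  intro u hu
  rcases mem_insert.1 hu with rfl | hu
  · obtain ⟨f, hf, hfa⟩ := mem_image.1 ha
    exact mem_image.2
      ⟨f, mem_union_right _ (mem_filter.2 ⟨hf, .base hf hfa⟩), hfa⟩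
  obtain ⟨hu₁, hu₂⟩ := mem_inter.1 hu
  obtain ⟨f, hf, rfl⟩ := mem_image.1 hu₁
  obtain ⟨g, hg, hgf⟩ := mem_image.1 hu₂
  by_cases hr : AltReach eu ew M₁ M₂ a g
  · exact mem_image.2 ⟨f, mem_union_right _
      (mem_filter.2 ⟨hf, .stepU hr hg hf hgf.symm⟩), rfl⟩
  · exact mem_image.2 ⟨g, mem_union_left _ (mem_filter.2 ⟨hg, hr⟩), hgf⟩

/-- **Mendelsohn–Dulmage theorem.** Flipping `M₂` along the alternating walks from a vertex `a`
covered by `M₁` but not by `M₂` covers `a`, keeps the `U`-vertices covered by both and all the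
`W`-vertices covered by `M₂` covered. -/
theorem exists_isMatching_image_superset {M₁ M₂ : Finset E} (hM₁ : IsMatching eu ew M₁)
    (hM₂ : IsMatching eu ew M₂) :
    ∃ N, IsMatching eu ew N ∧ M₁.image eu ⊆ N.image eu ∧ M₂.image ew ⊆ N.image ew := by
  by_cases h : M₁.image eu ⊆ M₂.image eu
  · exact ⟨M₂, hM₂, h, subset_rfl⟩
  obtain ⟨a, haM₁, haM₂⟩ := not_subset.1 h
  obtain ⟨N, hN, h₁, h₂⟩ :=
    exists_isMatching_image_superset (M₂ := altFlip eu ew M₁ M₂ a) hM₁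
      (isMatching_altFlip hM₁ hM₂ haM₂)
  exact ⟨N, hN, h₁, image_ew_subset_altFlip.trans h₂⟩
termination_by #(M₁.image eu \ M₂.image eu)
decreasing_by
  refine card_lt_card (Finset.ssubset_of_subset_of_ssubset ?_ (erase_ssubset
    (mem_sdiff.2 ⟨haM₁, haM₂⟩)))
  intro u hu
  obtain ⟨hu₁, hu₂⟩ := mem_sdiff.1 hu
  refine mem_erase.2 ⟨?_, mem_sdiff.2 ⟨hu₁, fun hu₂' => ?_⟩⟩
  · rintro rfl
    exact hu₂ (image_eu_inter_subset_altFlip hu₁ (mem_insert_self _ _))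
  · exact hu₂ (image_eu_inter_subset_altFlip haM₁ (mem_insert_of_mem
      (mem_inter.2 ⟨hu₁, hu₂'⟩)))

end Dulmage

section Konig

/-- Hall's theorem with deficiency `d`: the `d` extra targets `Fin d` absorb the unmatched. -/
theorem exists_injective_of_card_le_card_biUnion_add {ι α : Type*} [DecidableEq α]
    (t : ι → Finset α) (d : ℕ) (h : ∀ s : Finset ι, #s ≤ #(s.biUnion t) + d) :
    ∃ f : ι → α ⊕ Fin d, Function.Injective f ∧
      ∀ i, f i ∈ (t i).disjSum (univ : Finset (Fin d)) := by
  refine (all_card_le_biUnion_card_iff_exists_injective _).1 fun s => ?_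
  obtain rfl | ⟨i₀, hi₀⟩ := s.eq_empty_or_nonempty
  · simp
  have hsub : (s.biUnion t).disjSum (univ : Finset (Fin d)) ⊆
      s.biUnion fun i => (t i).disjSum univ := by
    intro x hx
    rcases x with a | k
    · obtain ⟨i, hi, ha⟩ := mem_biUnion.1 (inl_mem_disjSum.1 hx)
      exact mem_biUnion.2 ⟨i, hi, inl_mem_disjSum.2 ha⟩
    · exact mem_biUnion.2 ⟨i₀, hi₀, inr_mem_disjSum.2 (mem_univ k)⟩
  calc #s ≤ #(s.biUnion t) + d := h s
    _ = #((s.biUnion t).disjSum (univ : Finset (Fin d))) := by simp [card_disjSum]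
    _ ≤ _ := card_le_card hsub

variable {U W E : Type*} {eu : E → U} {ew : E → W}

theorem exists_isMatching_of_injective {ι : Type*} [Fintype ι] {v : ι → U} {g : ι → W}
    (hv : Function.Injective v) (hg : Function.Injective g)
    (hadj : ∀ i, ∃ e, eu e = v i ∧ ew e = g i) :
    ∃ M, IsMatching eu ew M ∧ ∀ i, v i ∈ M.image eu := by
  choose edge hedge using hadj
  refine ⟨univ.image edge, fun x hx y hy hne => ?_, fun i => mem_image.2
    ⟨edge i, mem_image_of_mem _ (mem_univ i), (hedge i).1⟩⟩
  obtain ⟨i, -, rfl⟩ := mem_image.1 hx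
  obtain ⟨j, -, rfl⟩ := mem_image.1 hy
  have hij : i ≠ j := fun h => hne (h ▸ rfl)
  rw [(hedge i).1, (hedge j).1, (hedge i).2, (hedge j).2]
  exact ⟨hv.ne hij, hg.ne hij⟩

variable [Fintype E]

variable (eu ew) in
noncomputable def neighborFinset (S : Finset U) : Finset W :=
  (univ.filter fun e => eu e ∈ S).image ew

theorem exists_isMatching_card_le_add (A : Finset U) (d : ℕ)
    (h : ∀ S ⊆ A, #S ≤ #(neighborFinset eu ew S) + d) :
    ∃ M, IsMatching eu ew M ∧ #A ≤ #(A ∩ M.image eu) + d := by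
  obtain ⟨f, hf, hft⟩ := exists_injective_of_card_le_card_biUnion_add
    (fun i : A => neighborFinset eu ew {i.1}) d fun s => by
      have hs := h (s.map (Function.Embedding.subtype _)) fun u hu => by
        obtain ⟨i, -, rfl⟩ := mem_map.1 hu
        exact i.2
      rw [card_map] at hs
      refine hs.trans (Nat.add_le_add_right (card_le_card fun w hw => ?_) d)
      obtain ⟨e, he, rfl⟩ := mem_image.1 hw
      obtain ⟨i, hi, hie⟩ := mem_map.1 (mem_filter.1 he).2
      exact mem_biUnion.2 ⟨i, hi, mem_image.2 ⟨e, by simp [← hie], rfl⟩⟩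
  have hadj (i : {i : A // (f i).isLeft}) :
      ∃ e, eu e = i.1.1 ∧ ew e = (f i.1).getLeft i.2 := by
    have hi := hft i.1
    rw [← Sum.inl_getLeft _ i.2, inl_mem_disjSum] at hi
    obtain ⟨e, he, hew⟩ := mem_image.1 hi
    exact ⟨e, by simpa using he, hew⟩
  obtain ⟨M, hM, hcov⟩ := exists_isMatching_of_injective
    (Subtype.val_injective.comp Subtype.val_injective)
    (fun i j hij => Subtype.ext (hf (by rw [← Sum.inl_getLeft _ i.2, ← Sum.inl_getLeft _ j.2,
      show (f i.1).getLeft i.2 = (f j.1).getLeft j.2 from hij]))) hadj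
  refine ⟨M, hM, ?_⟩
  have hleft : #(univ.filter fun i : A => (f i).isLeft) ≤ #(A ∩ M.image eu) :=
    card_le_card_of_injOn Subtype.val
      (fun i hi => mem_inter.2 ⟨i.2, hcov ⟨i, (mem_filter.1 hi).2⟩⟩)
      Subtype.val_injective.injOn
  have hright : #(univ.filter fun i : A => ¬ (f i).isLeft) ≤ d := by
    have := card_le_card_of_injOn (s := univ.filter fun i : A => ¬ (f i).isLeft)
      (t := (∅ : Finset W).disjSum (univ : Finset (Fin d))) f
      (fun i hi => ?_) hf.injOn
    · simpa [card_disjSum] using this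
    obtain ⟨k, hk⟩ := Sum.isRight_iff.1 (Sum.not_isLeft.1 (mem_filter.1 hi).2)
    simp [hk]
  have hsplit := card_filter_add_card_filter_not (s := (univ : Finset A)) fun i => (f i).isLeft
  rw [card_univ, Fintype.card_coe] at hsplit
  omega

end Konig

theorem sum_eq_sum_univ_iff {α : Type*} [Fintype α] (s : Finset α) (y : α → ℕ) :
    ∑ a ∈ s, y a = ∑ a, y a ↔ ∀ a, 0 < y a → a ∈ s := by
  rw [← sum_add_sum_compl s y, left_eq_add, sum_eq_zero_iff]
  refine forall_congr' fun a => ?_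
  rw [mem_compl, Nat.pos_iff_ne_zero]
  tauto

section Critical

variable {U W E : Type*} {eu : E → U} {ew : E → W}

variable (eu ew) in
noncomputable def critWeight (C : Finset (U ⊕ W)) (e : E) : ℕ :=
  (if Sum.inl (eu e) ∈ C then 1 else 0) + (if Sum.inr (ew e) ∈ C then 1 else 0)

theorem critCovered_eq_card_add_card (C : Finset (U ⊕ W)) (M : Finset E) :
    critCovered eu ew C M =
      #((M.image eu).filter (Sum.inl · ∈ C)) + #((M.image ew).filter (Sum.inr · ∈ C)) := by
  rw [critCovered, ← card_disjSum]
  congr 1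
  ext (u | w) <;> simp [and_comm]

theorem IsMatching.critCovered_eq_sum {M : Finset E} (hM : IsMatching eu ew M)
    (C : Finset (U ⊕ W)) : critCovered eu ew C M = ∑ f ∈ M, critWeight eu ew C f := by
  rw [critCovered_eq_card_add_card, card_filter, card_filter,
    sum_image fun e he f hf => hM.eq_of_eu_eq he hf,
    sum_image fun e he f hf => hM.swap.eq_of_eu_eq he hf, ← sum_add_distrib]
  rfl

theorem IsMatching.sum_eq_sum_image {M : Finset E} (hM : IsMatching eu ew M)
    (yU : U → ℕ) (yW : W → ℕ) :
    ∑ f ∈ M, (yU (eu f) + yW (ew f)) = ∑ u ∈ M.image eu, yU u + ∑ w ∈ M.image ew, yW w := by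
  rw [sum_add_distrib, sum_image fun e he f hf => hM.eq_of_eu_eq he hf,
    sum_image fun e he f hf => hM.swap.eq_of_eu_eq he hf]

variable (eu ew) in
/-- `(yU, yW)` is a feasible solution of the LP dual to maximising `critCovered`. -/
def IsCritCover (C : Finset (U ⊕ W)) (yU : U → ℕ) (yW : W → ℕ) : Prop :=
  ∀ e, critWeight eu ew C e ≤ yU (eu e) + yW (ew e)

end Critical

section Cover

variable {U W E : Type*} [Fintype U] [Fintype W] [Fintype E] {eu : E → U} {ew : E → W}

variable (eu ew) in
/-- **König's theorem**, one-sided form: the deficiency `#S - #N(S)` is maximised at some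
`S ⊆ A`, and `(A \ S) ∪ N(S)` is a cover of the edges at `A` of the size of a matching. -/
theorem exists_cover_of_subset (A : Finset U) :
    ∃ (yU : U → ℕ) (yW : W → ℕ) (M : Finset E), IsMatching eu ew M ∧
      (∀ e, eu e ∈ A → 1 ≤ yU (eu e) + yW (ew e)) ∧
      ∑ u, yU u + ∑ w, yW w ≤ #(A ∩ M.image eu) := by
  obtain ⟨S, hSA, hSmax⟩ := exists_max_image A.powerset
    (fun S => (#S : ℤ) - #(neighborFinset eu ew S)) ⟨∅, empty_mem_powerset _⟩
  rw [mem_powerset] at hSA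
  have hS₀ : #(neighborFinset eu ew S) ≤ #S := by
    simpa [neighborFinset] using hSmax ∅ (empty_mem_powerset _)
  obtain ⟨M, hM, hcard⟩ := exists_isMatching_card_le_add (eu := eu) (ew := ew) A
    (#S - #(neighborFinset eu ew S)) fun S' hS' => by
      have := hSmax S' (mem_powerset.2 hS'); omega
  refine ⟨fun u => if u ∈ A \ S then 1 else 0, fun w => if w ∈ neighborFinset eu ew S then 1 else 0,
    M, hM, fun e he => ?_, ?_⟩
  · by_cases heS : eu e ∈ S
    · have : ew e ∈ neighborFinset eu ew S := mem_image_of_mem _ (mem_filter.2 ⟨mem_univ e, heS⟩)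
      simp [this]
    · simp [he, heS]
  · simp only [sum_boole, filter_mem_eq_inter, univ_inter, Nat.cast_id]
    have := card_le_card hSA
    rw [card_sdiff_of_subset hSA]
    omega

variable (eu ew) in
theorem exists_critCover (C : Finset (U ⊕ W)) :
    ∃ (yU : U → ℕ) (yW : W → ℕ) (M : Finset E), IsMatching eu ew M ∧
      IsCritCover eu ew C yU yW ∧ ∑ u, yU u + ∑ w, yW w ≤ critCovered eu ew C M := by
  obtain ⟨yU₁, yW₁, M₁, hM₁, hy₁, hsum₁⟩ :=
    exists_cover_of_subset eu ew (univ.filter (Sum.inl · ∈ C))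
  obtain ⟨yW₂, yU₂, M₂, hM₂, hy₂, hsum₂⟩ :=
    exists_cover_of_subset ew eu (univ.filter (Sum.inr · ∈ C))
  obtain ⟨M, hM, h₁, h₂⟩ := exists_isMatching_image_superset hM₁ hM₂.swap
  refine ⟨yU₁ + yU₂, yW₁ + yW₂, M, hM, fun e => ?_, ?_⟩
  · have hU : (if Sum.inl (eu e) ∈ C then 1 else 0) ≤ yU₁ (eu e) + yW₁ (ew e) := by
      split_ifs with h
      exacts [hy₁ e (mem_filter.2 ⟨mem_univ _, h⟩), Nat.zero_le _]
    have hW : (if Sum.inr (ew e) ∈ C then 1 else 0) ≤ yW₂ (ew e) + yU₂ (eu e) := by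
      split_ifs with h
      exacts [hy₂ e (mem_filter.2 ⟨mem_univ _, h⟩), Nat.zero_le _]
    simp only [critWeight, Pi.add_apply]
    omega
  · have hU : #(univ.filter (Sum.inl · ∈ C) ∩ M₁.image eu) ≤
        #((M.image eu).filter (Sum.inl · ∈ C)) :=
      card_le_card fun u hu => by
        simp only [mem_inter, mem_filter, mem_univ, true_and] at hu ⊢; exact ⟨h₁ hu.2, hu.1⟩
    have hW : #(univ.filter (Sum.inr · ∈ C) ∩ M₂.image ew) ≤
        #((M.image ew).filter (Sum.inr · ∈ C)) :=
      card_le_card fun w hw => by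
        simp only [mem_inter, mem_filter, mem_univ, true_and] at hw ⊢; exact ⟨h₂ hw.2, hw.1⟩
    simp only [Pi.add_apply, sum_add_distrib, critCovered_eq_card_add_card]
    omega

end Cover

section Slackness

variable {U W E : Type*} {eu : E → U} {ew : E → W} [Fintype U] [Fintype W]
  {C : Finset (U ⊕ W)} {yU : U → ℕ} {yW : W → ℕ}

theorem IsCritCover.critCovered_le (hy : IsCritCover eu ew C yU yW) {N : Finset E}
    (hN : IsMatching eu ew N) : critCovered eu ew C N ≤ ∑ u, yU u + ∑ w, yW w := by
  rw [hN.critCovered_eq_sum]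
  calc ∑ f ∈ N, critWeight eu ew C f ≤ ∑ f ∈ N, (yU (eu f) + yW (ew f)) :=
        sum_le_sum fun f _ => hy f
    _ = ∑ u ∈ N.image eu, yU u + ∑ w ∈ N.image ew, yW w := hN.sum_eq_sum_image yU yW
    _ ≤ ∑ u, yU u + ∑ w, yW w :=
      add_le_add (sum_le_sum_of_subset (subset_univ _)) (sum_le_sum_of_subset (subset_univ _))

variable [Fintype E]

variable (eu ew C yU yW) in
noncomputable def tightEdges : Finset E :=
  univ.filter fun e => yU (eu e) + yW (ew e) = critWeight eu ew C e

/-- Complementary slackness. -/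
theorem IsCritCover.critCovered_eq_iff (hy : IsCritCover eu ew C yU yW) {N : Finset E}
    (hN : IsMatching eu ew N) :
    critCovered eu ew C N = ∑ u, yU u + ∑ w, yW w ↔ N ⊆ tightEdges eu ew C yU yW ∧
      (∀ u, 0 < yU u → u ∈ N.image eu) ∧ (∀ w, 0 < yW w → w ∈ N.image ew) := by
  have htight : ∑ f ∈ N, critWeight eu ew C f = ∑ f ∈ N, (yU (eu f) + yW (ew f)) ↔
      N ⊆ tightEdges eu ew C yU yW := by
    rw [sum_eq_sum_iff_of_le fun f _ => hy f]
    simp only [subset_iff, tightEdges, mem_filter, mem_univ, true_and, eq_comm]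
  rw [← sum_eq_sum_univ_iff, ← sum_eq_sum_univ_iff, ← htight, hN.critCovered_eq_sum]
  have h₁ : ∑ f ∈ N, critWeight eu ew C f ≤ ∑ f ∈ N, (yU (eu f) + yW (ew f)) :=
    sum_le_sum fun f _ => hy f
  have h₂ : ∑ u ∈ N.image eu, yU u ≤ ∑ u, yU u := sum_le_sum_of_subset (subset_univ _)
  have h₃ : ∑ w ∈ N.image ew, yW w ≤ ∑ w, yW w := sum_le_sum_of_subset (subset_univ _)
  rw [hN.sum_eq_sum_image] at h₁ ⊢
  constructor <;> intro h <;> omega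

theorem IsCritCover.isCritical_iff (hy : IsCritCover eu ew C yU yW) {M₀ : Finset E}
    (hM₀ : IsMatching eu ew M₀) (hM₀y : ∑ u, yU u + ∑ w, yW w ≤ critCovered eu ew C M₀)
    {N : Finset E} (hN : IsMatching eu ew N) :
    IsCritical eu ew C N ↔ N ⊆ tightEdges eu ew C yU yW ∧
      (∀ u, 0 < yU u → u ∈ N.image eu) ∧ (∀ w, 0 < yW w → w ∈ N.image ew) := by
  rw [← hy.critCovered_eq_iff hN]
  refine ⟨fun h => le_antisymm (hy.critCovered_le hN) (hM₀y.trans (h M₀ hM₀)), fun h N' hN' => ?_⟩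
  exact h ▸ hy.critCovered_le hN'

end Slackness

section Keys

variable {U W E : Type*} {eu : E → U} {ew : E → W}

variable (eu ew) in
noncomputable def coverRank (X : U → Prop) (M₀ : Finset E) (e : E) : ℕ :=
  if X (eu e) then (if ∃ g ∈ M₀, eu g = eu e ∧ ew g = ew e then 2 else 1) else 0

variable (eu ew) in
noncomputable def coverKey (X : U → Prop) (M₀ : Finset E) (p : E → ℝ) (e : E) : ℕ ×ₗ ℝ :=
  toLex (coverRank eu ew X M₀ e, p e)

theorem mem_image_of_isStableIn {K : Type*} [LE K] {kU : E → K} {X : U → Prop} {p : E → ℝ}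
    {M₀ M A : Finset E} (hM₀ : IsMatching eu ew M₀) (hM₀A : M₀ ⊆ A)
    (hM : IsStableIn eu ew kU (coverKey eu ew X M₀ p) A M) {u : U} (hu : X u)
    (hu₀ : u ∈ M₀.image eu) : u ∈ M.image eu := by
  obtain ⟨g, hg, rfl⟩ := mem_image.1 hu₀
  by_cases hgM : g ∈ M
  · exact mem_image_of_mem _ hgM
  rcases hM.2.2 g (hM₀A hg) hgM with ⟨f, hf, hfu, -⟩ | ⟨f, hf, hfw, hle⟩
  · exact mem_image.2 ⟨f, hf, hfu⟩
  have hrank : 2 ≤ coverRank eu ew X M₀ f := by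
    have hg₂ : coverRank eu ew X M₀ g = 2 := by
      rw [coverRank, if_pos hu, if_pos ⟨g, hg, rfl, rfl⟩]
    exact hg₂ ▸ Prod.Lex.monotone_fst _ _ hle
  obtain ⟨g', hg', hg'u, hg'w⟩ : ∃ g' ∈ M₀, eu g' = eu f ∧ ew g' = ew f := by
    unfold coverRank at hrank
    split_ifs at hrank with h₁ h₂ <;> first | exact h₂ | omega
  rw [hM₀.swap.eq_of_eu_eq hg' hg (hg'w.trans hfw)] at hg'u
  exact mem_image.2 ⟨f, hf, hg'u.symm⟩

theorem le_valU_of_coverKey_le [DecidableEq E] {X : W → Prop} {p : E → ℝ} {M₀ M : Finset E}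
    (hM : IsMatching eu ew M) {e f : E} (hf : f ∈ M) (hfe : eu f = eu e)
    (hle : coverKey ew eu X M₀ p e ≤ coverKey ew eu X M₀ p f)
    (hcov : ∀ w, X w → w ∈ (swapIn eu ew M e).image ew) : p e ≤ valU eu p M (eu e) := by
  rw [← hfe, valU_eq_of_mem hM hf]
  have hrank : coverRank ew eu X M₀ f ≤ coverRank ew eu X M₀ e := by
    by_cases hw : ew f = ew e
    · simp only [coverRank, hw, hfe, le_refl]
    · have hX : ¬ X (ew f) := fun hX => notMem_image_swapIn hM hf hfe hw (hcov _ hX)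
      simp [coverRank, hX]
  rw [coverKey, coverKey, Prod.Lex.toLex_le_toLex] at hle
  rcases hle with h | ⟨-, h⟩
  exacts [absurd h (not_lt.2 hrank), h]

end Keys

theorem exists_critical_relaxed_stable_general {U W E : Type*} [Fintype U] [Fintype W]
    [Fintype E] [DecidableEq E]
    (eu : E → U) (ew : E → W) (pU pW : E → ℝ)
    (C : Finset (U ⊕ W)) :
    ∃ M : Finset E, IsMatching eu ew M ∧ IsCritical eu ew C M ∧
      ∀ e, ¬ (Blocks eu ew pU pW M e ∧ IsCritical eu ew C (swapIn eu ew M e)) := by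
  obtain ⟨yU, yW, M₀, hM₀, hy, hM₀y⟩ := exists_critCover eu ew C
  have hcrit {N : Finset E} (hN : IsMatching eu ew N) := hy.isCritical_iff hM₀ hM₀y hN
  obtain ⟨hM₀A, hM₀U, hM₀W⟩ := (hcrit hM₀).1 fun N hN => (hy.critCovered_le hN).trans hM₀y
  obtain ⟨M, hM⟩ := exists_isStableIn eu ew (coverKey ew eu (0 < yW ·) M₀ pU)
    (coverKey eu ew (0 < yU ·) M₀ pW) (tightEdges eu ew C yU yW)
  refine ⟨M, hM.2.1, (hcrit hM.2.1).2 ⟨hM.1,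
    fun u hu => mem_image_of_isStableIn hM₀ hM₀A hM hu (hM₀U u hu),
    fun w hw => mem_image_of_isStableIn hM₀.swap hM₀A hM.swap hw (hM₀W w hw)⟩, ?_⟩
  rintro e ⟨⟨heM, hbU, hbW⟩, hswap⟩
  obtain ⟨hsA, hsU, hsW⟩ := (hcrit (isMatching_swapIn hM.2.1 heM)).1 hswap
  rcases hM.2.2 e (hsA (mem_insert_self e _)) heM with ⟨f, hf, hfe, hle⟩ | ⟨f, hf, hfe, hle⟩
  · exact (le_valU_of_coverKey_le hM.2.1 hf hfe hle hsW).not_gt hbU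
  · exact (le_valU_of_coverKey_le hM.2.1.swap hf hfe hle (by rwa [swapIn_comm])).not_gt hbW

/-- For every finite bipartite multigraph with preference functions
(ties allowed) and critical vertices `C`, there is a critical matching `M` with no
blocking edge `e = (u, w)` such that `M \ {M(u), M(w)} ∪ {e}` is still critical. -/
theorem exists_critical_relaxed_stable {U W E : Type*} [Fintype U] [Fintype W]
    [Fintype E] [DecidableEq E]
    (eu : E → U) (ew : E → W) (pU pW : E → ℝ)
    (hpU : ∀ e, 0 ≤ pU e) (hpW : ∀ e, 0 ≤ pW e)
    (C : Finset (U ⊕ W)) :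
    ∃ M : Finset E, IsMatching eu ew M ∧ IsCritical eu ew C M ∧
      ∀ e, ¬ (Blocks eu ew pU pW M e ∧ IsCritical eu ew C (swapIn eu ew M e)) :=
  exists_critical_relaxed_stable_general eu ew pU pW C
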